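/- Let k : ℝⁿ × ℝⁿ → ℝ be a measurable kernel for which there exist C, δ > 0 such that |k(x,y) − k(x',y)| ≤ C·|x − x'|^δ / |x − y|^{n+δ} whenever x, x' ∈ Q and y ∈ (2Q)^c for some cube Q. Let 0 < s ≤ 1/2, 1/2 ≤ t ≤ 1−s, let Q be a cube with center x_Q, let f be a locally integrable function, and suppose ∫_{(2Q)^c} |f(y) − m_f(t,Q)| / |z − y|^{n+δ} dy < ∞ for z ∈ Q. Then there is a constant c = c_{n,δ,s} (also depending on C) such that for every z ∈ Q, |∫_{(2Q)^c} (k(z,y) − k(x_Q,y)) (f(y) − m_f(t,Q)) dy| ≤ c · inf_{y ∈ Q} M♯f(y). -/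

import Mathlib

/-!
Split `(2Q)ᶜ` into the dyadic annuli `2^(j+2)Q \ 2^(j+1)Q`. On the `j`-th annulus the Hölder
condition bounds `|k(z,y) - k(x_Q,y)|` by `C (√n)^δ 2^(-jδ) / (2^(j-1) ℓ(Q))^n`, while
`∫_{2^(j+2)Q} |f - m_f(t,Q)| ≤ |2^(j+2)Q| ((j+2) 2^n + 1/s + 1) M♯f(y)` for every `y ∈ Q`:
the averages of `f` over consecutive dilates `2^i Q` differ by at most `2^n M♯f(y)`, and
Chebyshev's inequality puts the median within `M♯f(y)/s` of the average over `Q`, because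
`s ≤ t ≤ 1 - s`. The resulting series `∑ 2^(-jδ) (j + O(1))` converges.
-/

open MeasureTheory ENNReal

namespace LocalMedian

/-- Euclidean space `ℝⁿ`. -/
abbrev Sp (n : ℕ) := EuclideanSpace ℝ (Fin n)

/-- An axis-parallel cube in `ℝⁿ`, given by its lower corner and (positive) sidelength. -/
structure Cube (n : ℕ) where
  corner : Sp n
  side : ℝ
  side_pos : 0 < side

namespace Cube

variable {n : ℕ}

/-- The set of points of the cube. -/
def set (Q : Cube n) : Set (Sp n) :=
  {x | ∀ i, Q.corner i ≤ x i ∧ x i ≤ Q.corner i + Q.side}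

/-- The center of the cube. -/
noncomputable def center (Q : Cube n) : Sp n := WithLp.toLp 2 (fun i => Q.corner i + Q.side / 2)

/-- The cube concentric with `Q` whose sidelength is `r` times that of `Q`. -/
noncomputable def dilate (Q : Cube n) (r : ℝ) (hr : 0 < r) : Cube n where
  corner := WithLp.toLp 2 (fun i => Q.center i - r * Q.side / 2)
  side := r * Q.side
  side_pos := mul_pos hr Q.side_pos

/-- `Q` is a dyadic subcube of `Q₀`, i.e. obtained from `Q₀` by repeated dyadic
subdivision into `2ⁿ` congruent subcubes. -/
def dyadicSub (Q₀ Q : Cube n) : Prop :=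
  ∃ (k : ℕ) (m : Fin n → ℕ), (∀ i, m i < 2 ^ k) ∧
    Q.side = Q₀.side / 2 ^ k ∧ ∀ i, Q.corner i = Q₀.corner i + Q.side * m i

/-- `Q` is one of the `2ⁿ` dyadic children of `P` (so `P` is the dyadic parent of `Q`). -/
def isDyadicChild (Q P : Cube n) : Prop :=
  Q.side = P.side / 2 ∧ ∃ m : Fin n → ℕ, (∀ i, m i < 2) ∧
    ∀ i, Q.corner i = P.corner i + Q.side * m i

end Cube

variable {n : ℕ}

/-- The (maximal) median of `f` over the cube `Q` with parameter `t`: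
`m_f(t,Q) = sup { M : |{y ∈ Q : f y < M}| ≤ t|Q| }`. -/
noncomputable def median (f : Sp n → ℝ) (t : ℝ) (Q : Cube n) : ℝ :=
  sSup {M : ℝ | volume {y ∈ Q.set | f y < M} ≤ ENNReal.ofReal t * volume Q.set}

/-- The local oscillation `inf_c inf {α ≥ 0 : |{y ∈ Q : |f y - c| > α}| < s|Q|}`. -/
noncomputable def osc (f : Sp n → ℝ) (s : ℝ) (Q : Cube n) : ℝ :=
  ⨅ c : ℝ, sInf {α : ℝ | 0 ≤ α ∧
    volume {y ∈ Q.set | α < |f y - c|} < ENNReal.ofReal s * volume Q.set}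

/-- The local sharp maximal function `M♯_{0,s,Q₀} f`, restricted to the cube `Q₀`. -/
noncomputable def sharpLoc (f : Sp n → ℝ) (s : ℝ) (Q₀ : Cube n) (x : Sp n) : ℝ≥0∞ :=
  ⨆ Q : {Q : Cube n // x ∈ Q.set ∧ Q.set ⊆ Q₀.set}, ENNReal.ofReal (osc f s Q.1)

/-- The local sharp maximal function `M♯_{0,s} f` (over all cubes containing `x`). -/
noncomputable def sharp (f : Sp n → ℝ) (s : ℝ) (x : Sp n) : ℝ≥0∞ :=
  ⨆ Q : {Q : Cube n // x ∈ Q.set}, ENNReal.ofReal (osc f s Q.1)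

/-- The Hardy–Littlewood maximal function (over cubes containing `x`). -/
noncomputable def maximal (f : Sp n → ℝ) (x : Sp n) : ℝ≥0∞ :=
  ⨆ Q : {Q : Cube n // x ∈ Q.set},
    (∫⁻ y in Q.1.set, ENNReal.ofReal |f y|) / volume Q.1.set

/-- The Hardy–Littlewood maximal function of an `ℝ≥0∞`-valued function. -/
noncomputable def maximalE (g : Sp n → ℝ≥0∞) (x : Sp n) : ℝ≥0∞ :=
  ⨆ Q : {Q : Cube n // x ∈ Q.set}, (∫⁻ y in Q.1.set, g y) / volume Q.1.set

/-- The average `(1/|Q|) ∫_Q g`. -/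
noncomputable def cubeAvg (g : Sp n → ℝ) (Q : Cube n) : ℝ :=
  (volume Q.set).toReal⁻¹ * ∫ y in Q.set, g y

/-- The Fefferman–Stein sharp maximal function
`M♯ g(x) = sup_{Q ∋ x} (1/|Q|) ∫_Q |g - g_Q|`. -/
noncomputable def fsSharp (g : Sp n → ℝ) (x : Sp n) : ℝ≥0∞ :=
  ⨆ Q : {Q : Cube n // x ∈ Q.set},
    ENNReal.ofReal (cubeAvg (fun y => |g y - cubeAvg g Q.1|) Q.1)

namespace Cube

theorem mem_set_iff (Q : Cube n) (x : Sp n) :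
    x ∈ Q.set ↔ ∀ i, |x i - Q.center i| ≤ Q.side / 2 := by
  simp only [set, center, abs_le]
  exact forall_congr' fun i => by constructor <;> rintro ⟨h₁, h₂⟩ <;> constructor <;> linarith

theorem mem_dilate_set_iff (Q : Cube n) {r : ℝ} (hr : 0 < r) (x : Sp n) :
    x ∈ (Q.dilate r hr).set ↔ ∀ i, |x i - Q.center i| ≤ r * Q.side / 2 := by
  simp only [set, dilate, center, abs_le]
  exact forall_congr' fun i => by constructor <;> rintro ⟨h₁, h₂⟩ <;> constructor <;> linarith

theorem dilate_one_set (Q : Cube n) : (Q.dilate 1 one_pos).set = Q.set := by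
  ext x
  rw [mem_dilate_set_iff, mem_set_iff, one_mul]

theorem center_mem_set (Q : Cube n) : Q.center ∈ Q.set :=
  (Q.mem_set_iff _).2 fun i => by simpa using (half_pos Q.side_pos).le

theorem dilate_set_mono (Q : Cube n) {r r' : ℝ} (hr : 0 < r) (hr' : 0 < r') (h : r ≤ r') :
    (Q.dilate r hr).set ⊆ (Q.dilate r' hr').set := fun x hx => by
  rw [mem_dilate_set_iff] at hx ⊢
  exact fun i => (hx i).trans (by gcongr; exact Q.side_pos.le)

theorem set_subset_dilate_set (Q : Cube n) {r : ℝ} (hr : 1 ≤ r) :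
    Q.set ⊆ (Q.dilate r (one_pos.trans_le hr)).set := by
  simpa only [dilate_one_set] using Q.dilate_set_mono one_pos _ hr

theorem set_eq_preimage_ofLp (Q : Cube n) :
    Q.set = WithLp.ofLp ⁻¹' Set.univ.pi fun i => Set.Icc (Q.corner i) (Q.corner i + Q.side) := by
  ext x
  exact ⟨fun h i _ => h i, fun h i => h i trivial⟩

theorem measurableSet_set (Q : Cube n) : MeasurableSet Q.set := by
  rw [set_eq_preimage_ofLp]
  exact (PiLp.continuous_ofLp 2 _).measurable (MeasurableSet.univ_pi fun _ => measurableSet_Icc)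

theorem isCompact_set (Q : Cube n) : IsCompact Q.set := by
  rw [set_eq_preimage_ofLp]
  exact (PiLp.homeomorph 2 _).isCompact_preimage.2 (isCompact_univ_pi fun _ => isCompact_Icc)

theorem volume_set (Q : Cube n) : volume Q.set = ENNReal.ofReal (Q.side ^ n) := by
  rw [set_eq_preimage_ofLp, (PiLp.volume_preserving_ofLp _).measure_preimage
    (MeasurableSet.univ_pi fun _ => measurableSet_Icc).nullMeasurableSet, volume_pi_pi]
  simp [Real.volume_Icc, ← ENNReal.ofReal_pow Q.side_pos.le]

theorem volume_set_ne_top (Q : Cube n) : volume Q.set ≠ ⊤ := by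
  simp [volume_set]

theorem volume_set_toReal (Q : Cube n) : (volume Q.set).toReal = Q.side ^ n := by
  rw [volume_set, ENNReal.toReal_ofReal (pow_nonneg Q.side_pos.le n)]

theorem norm_sub_center_le {Q : Cube n} {z : Sp n} (hz : z ∈ Q.set) :
    ‖z - Q.center‖ ≤ √n * (Q.side / 2) := by
  have hside : 0 ≤ Q.side / 2 := (half_pos Q.side_pos).le
  rw [EuclideanSpace.norm_eq, ← Real.sqrt_sq hside, ← Real.sqrt_mul n.cast_nonneg]
  gcongr
  calc ∑ i, ‖(z - Q.center) i‖ ^ 2 ≤ ∑ _i : Fin n, (Q.side / 2) ^ 2 :=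
        Finset.sum_le_sum fun i _ => pow_le_pow_left₀ (norm_nonneg _) ((Q.mem_set_iff z).1 hz i) 2
    _ = n * (Q.side / 2) ^ 2 := by simp

theorem le_norm_sub_of_notMem_dilate {Q : Cube n} {z y : Sp n} (hz : z ∈ Q.set) {j : ℕ}
    (hy : y ∉ (Q.dilate (2 ^ (j + 1)) (by positivity)).set) :
    2 ^ j * (Q.side / 2) ≤ ‖z - y‖ := by
  obtain ⟨i, hi⟩ := not_forall.1 (mt (Q.mem_dilate_set_iff _ y).2 hy)
  have hzi := (Q.mem_set_iff z).1 hz i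
  have hj : (1 : ℝ) ≤ 2 ^ j := one_le_pow₀ one_le_two
  have := Q.side_pos
  calc 2 ^ j * (Q.side / 2) ≤ |z i - y i| := by
        have htri := abs_sub_le (y i) (z i) (Q.center i)
        rw [abs_sub_comm (y i) (z i)] at htri
        rw [pow_succ] at hi
        nlinarith
    _ ≤ ‖z - y‖ := PiLp.norm_apply_le (z - y) i

theorem exists_mem_dilate_pow (Q : Cube n) (x : Sp n) :
    ∃ j : ℕ, x ∈ (Q.dilate (2 ^ (j + 1)) (by positivity)).set := by
  obtain ⟨j, hj⟩ := pow_unbounded_of_one_lt (‖x - Q.center‖ / Q.side) one_lt_two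
  refine ⟨j, (Q.mem_dilate_set_iff _ x).2 fun i => ?_⟩
  rw [div_lt_iff₀ Q.side_pos] at hj
  calc |x i - Q.center i| ≤ ‖x - Q.center‖ := PiLp.norm_apply_le (x - Q.center) i
    _ ≤ 2 ^ (j + 1) * Q.side / 2 := by rw [pow_succ]; linarith

theorem compl_dilate_two_subset_iUnion (Q : Cube n) :
    ((Q.dilate 2 two_pos).set)ᶜ ⊆ ⋃ j : ℕ, (Q.dilate (2 ^ (j + 2)) (by positivity)).set \
      (Q.dilate (2 ^ (j + 1)) (by positivity)).set := by
  intro x hx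
  obtain ⟨j, hj, hj'⟩ := Nat.exists_not_and_succ_of_not_zero_of_exists
    (p := fun j => x ∈ (Q.dilate (2 ^ (j + 1)) (by positivity)).set) (by simpa using hx)
    (Q.exists_mem_dilate_pow x)
  exact Set.mem_iUnion.2 ⟨j, hj', hj⟩

end Cube

variable {f : Sp n → ℝ}

theorem cubeAvg_eq_integral_div (g : Sp n → ℝ) (P : Cube n) :
    cubeAvg g P = (∫ x in P.set, g x) / P.side ^ n := by
  rw [cubeAvg, P.volume_set_toReal, inv_mul_eq_div]

theorem cubeAvg_sub_const {P : Cube n} (hf : IntegrableOn f P.set) (c : ℝ) :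
    cubeAvg (fun x => f x - c) P = cubeAvg f P - c := by
  have := pow_pos P.side_pos n
  rw [cubeAvg_eq_integral_div, cubeAvg_eq_integral_div,
    integral_sub hf (integrableOn_const P.volume_set_ne_top), setIntegral_const, smul_eq_mul,
    measureReal_def, P.volume_set_toReal]
  field_simp

theorem abs_cubeAvg_le (g : Sp n → ℝ) (P : Cube n) :
    |cubeAvg g P| ≤ cubeAvg (fun x => |g x|) P := by
  rw [cubeAvg_eq_integral_div, cubeAvg_eq_integral_div, abs_div,
    abs_of_pos (pow_pos P.side_pos n)]
  exact div_le_div_of_nonneg_right abs_integral_le_integral_abs (pow_pos P.side_pos n).le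

theorem cubeAvg_abs_sub_cubeAvg_le_fsSharp {P : Cube n} {y : Sp n} (hy : y ∈ P.set)
    (hA : fsSharp f y ≠ ⊤) :
    cubeAvg (fun x => |f x - cubeAvg f P|) P ≤ (fsSharp f y).toReal :=
  (ENNReal.ofReal_le_iff_le_toReal hA).1 <| le_iSup (fun R : {R : Cube n // y ∈ R.set} =>
    ENNReal.ofReal (cubeAvg (fun x => |f x - cubeAvg f R.1|) R.1)) ⟨P, hy⟩

theorem integral_abs_sub_cubeAvg_le {P : Cube n} {y : Sp n} (hy : y ∈ P.set)
    (hA : fsSharp f y ≠ ⊤) :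
    ∫ x in P.set, |f x - cubeAvg f P| ≤ P.side ^ n * (fsSharp f y).toReal := by
  have := cubeAvg_abs_sub_cubeAvg_le_fsSharp hy hA
  rwa [cubeAvg_eq_integral_div, div_le_iff₀' (pow_pos P.side_pos n)] at this

theorem abs_cubeAvg_sub_cubeAvg_le {P P' : Cube n} (hf : IntegrableOn f P'.set)
    (hPP' : P.set ⊆ P'.set) {y : Sp n} (hy : y ∈ P'.set) (hA : fsSharp f y ≠ ⊤) :
    |cubeAvg f P - cubeAvg f P'| ≤ (P'.side / P.side) ^ n * (fsSharp f y).toReal := by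
  have hP := pow_pos P.side_pos n
  have hint : IntegrableOn (fun x => |f x - cubeAvg f P'|) P'.set :=
    (hf.sub (integrableOn_const P'.volume_set_ne_top)).abs
  rw [← cubeAvg_sub_const (hf.mono_set hPP')]
  refine (abs_cubeAvg_le _ P).trans ?_
  rw [cubeAvg_eq_integral_div, div_pow, div_mul_eq_mul_div, div_le_div_iff_of_pos_right hP]
  calc ∫ x in P.set, |f x - cubeAvg f P'|
      ≤ ∫ x in P'.set, |f x - cubeAvg f P'| :=
        setIntegral_mono_set hint (.of_forall fun _ => abs_nonneg _) hPP'.eventuallyLE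
    _ ≤ P'.side ^ n * (fsSharp f y).toReal := integral_abs_sub_cubeAvg_le hy hA

theorem abs_cubeAvg_dilate_sub_cubeAvg_le (hf : LocallyIntegrable f volume) {Q : Cube n}
    {y : Sp n} (hy : y ∈ Q.set) (hA : fsSharp f y ≠ ⊤) (j : ℕ) :
    |cubeAvg f (Q.dilate (2 ^ j) (by positivity)) - cubeAvg f Q| ≤
      j * 2 ^ n * (fsSharp f y).toReal := by
  induction j with
  | zero => simp [cubeAvg, Q.dilate_one_set]
  | succ j ih =>
    have hstep := abs_cubeAvg_sub_cubeAvg_le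
      (hf.integrableOn_isCompact (Q.dilate (2 ^ (j + 1)) (by positivity)).isCompact_set)
      (Q.dilate_set_mono (by positivity) _ (pow_le_pow_right₀ one_le_two j.le_succ))
      (Q.set_subset_dilate_set (one_le_pow₀ one_le_two) hy) hA
    have hratio : (Q.dilate (2 ^ (j + 1)) (by positivity)).side /
        (Q.dilate (2 ^ j) (by positivity)).side = 2 := by
      simp only [Cube.dilate, pow_succ]
      field_simp [Q.side_pos.ne']
    rw [hratio, abs_sub_comm] at hstep
    calc _ ≤ _ := abs_sub_le _ (cubeAvg f (Q.dilate (2 ^ j) (by positivity))) _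
      _ ≤ 2 ^ n * (fsSharp f y).toReal + j * 2 ^ n * (fsSharp f y).toReal := add_le_add hstep ih
      _ = (j + 1 : ℕ) * 2 ^ n * (fsSharp f y).toReal := by push_cast; ring

def medianSet (f : Sp n → ℝ) (t : ℝ) (Q : Cube n) : Set ℝ :=
  {M : ℝ | volume {y ∈ Q.set | f y < M} ≤ ENNReal.ofReal t * volume Q.set}

section Median

variable {Q : Cube n} {t : ℝ}

theorem ofReal_mul_volume_le_integral_abs_sub (hf : IntegrableOn f Q.set) (c l : ℝ) :
    ENNReal.ofReal l * volume {y ∈ Q.set | l ≤ |f y - c|} ≤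
      ENNReal.ofReal (∫ y in Q.set, |f y - c|) := by
  have hint : IntegrableOn (fun y => |f y - c|) Q.set :=
    (hf.sub (integrableOn_const Q.volume_set_ne_top)).abs
  rw [ofReal_integral_eq_lintegral_ofReal hint (.of_forall fun _ => abs_nonneg _)]
  calc ENNReal.ofReal l * volume {y ∈ Q.set | l ≤ |f y - c|}
      ≤ ENNReal.ofReal l *
          volume.restrict Q.set {y | ENNReal.ofReal l ≤ ENNReal.ofReal |f y - c|} := by
        refine mul_le_mul_right ((measure_mono ?_).trans (Measure.le_restrict_apply _ _)) _
        exact fun y hy => ⟨ENNReal.ofReal_le_ofReal hy.2, hy.1⟩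
    _ ≤ ∫⁻ y in Q.set, ENNReal.ofReal |f y - c| :=
        mul_meas_ge_le_lintegral₀ hint.aemeasurable.ennreal_ofReal _

theorem sub_mem_medianSet (hf : IntegrableOn f Q.set) (c : ℝ) {l : ℝ} (hl : 0 < l)
    (h : ∫ y in Q.set, |f y - c| ≤ l * (t * Q.side ^ n)) : c - l ∈ medianSet f t Q := by
  rw [medianSet, Set.mem_ofPred_eq,
    ← ENNReal.mul_le_mul_iff_right (ENNReal.ofReal_pos.2 hl).ne' ENNReal.ofReal_ne_top]
  calc ENNReal.ofReal l * volume {y ∈ Q.set | f y < c - l}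
      ≤ ENNReal.ofReal l * volume {y ∈ Q.set | l ≤ |f y - c|} := by
        gcongr with y
        exact fun hy => le_abs.2 (Or.inr (by linarith))
    _ ≤ ENNReal.ofReal (∫ y in Q.set, |f y - c|) := ofReal_mul_volume_le_integral_abs_sub hf c l
    _ ≤ ENNReal.ofReal l * (ENNReal.ofReal t * volume Q.set) := by
        rw [Q.volume_set, ← ENNReal.ofReal_mul' (pow_nonneg Q.side_pos.le n),
          ← ENNReal.ofReal_mul hl.le]
        exact ENNReal.ofReal_le_ofReal h

theorem lt_add_of_mem_medianSet (hf : IntegrableOn f Q.set) (c : ℝ) (ht : 0 ≤ t) {l M : ℝ}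
    (hl : 0 < l) (h : ∫ y in Q.set, |f y - c| < l * ((1 - t) * Q.side ^ n))
    (hM : M ∈ medianSet f t Q) : M < c + l := by
  by_contra! hM'
  have hcover : Q.set ⊆ {y ∈ Q.set | f y < M} ∪ {y ∈ Q.set | l ≤ |f y - c|} := fun y hy =>
    (lt_or_ge (f y) M).imp (fun h => ⟨hy, h⟩) fun h => ⟨hy, le_abs.2 (Or.inl (by linarith))⟩
  have hV := pow_nonneg Q.side_pos.le n
  have key : ENNReal.ofReal (l * Q.side ^ n) ≤
      ENNReal.ofReal (l * (t * Q.side ^ n) + ∫ y in Q.set, |f y - c|) := calc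
    ENNReal.ofReal (l * Q.side ^ n) = ENNReal.ofReal l * volume Q.set := by
      rw [Q.volume_set, ENNReal.ofReal_mul hl.le]
    _ ≤ ENNReal.ofReal l * (volume {y ∈ Q.set | f y < M} +
          volume {y ∈ Q.set | l ≤ |f y - c|}) := by
      gcongr
      exact (measure_mono hcover).trans (measure_union_le _ _)
    _ ≤ ENNReal.ofReal l * (ENNReal.ofReal t * volume Q.set) +
          ENNReal.ofReal (∫ y in Q.set, |f y - c|) := by
      rw [mul_add]
      gcongr
      · exact hM
      · exact ofReal_mul_volume_le_integral_abs_sub hf c l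
    _ = _ := by
      rw [Q.volume_set, ← ENNReal.ofReal_mul ht, ← ENNReal.ofReal_mul hl.le,
        ← ENNReal.ofReal_add (by positivity) (integral_nonneg fun _ => abs_nonneg _)]
  rw [ENNReal.ofReal_le_ofReal_iff (by positivity)] at key
  linarith

theorem medianSet_nonempty (hf : IntegrableOn f Q.set) (ht : 0 < t) :
    (medianSet f t Q).Nonempty := by
  have hV : 0 < t * Q.side ^ n := mul_pos ht (pow_pos Q.side_pos n)
  set I := ∫ y in Q.set, |f y - 0|
  refine ⟨_, sub_mem_medianSet hf 0 (l := I / (t * Q.side ^ n) + 1) (by positivity) ?_⟩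
  rw [add_mul, div_mul_cancel₀ _ hV.ne']
  linarith

theorem bddAbove_medianSet (hf : IntegrableOn f Q.set) (ht0 : 0 ≤ t) (ht1 : t < 1) :
    BddAbove (medianSet f t Q) := by
  have hV : 0 < (1 - t) * Q.side ^ n := mul_pos (by linarith) (pow_pos Q.side_pos n)
  set I := ∫ y in Q.set, |f y - 0|
  refine ⟨_, fun M hM => (lt_add_of_mem_medianSet hf 0 ht0
    (l := I / ((1 - t) * Q.side ^ n) + 1) (by positivity) ?_ hM).le⟩
  rw [add_mul, div_mul_cancel₀ _ hV.ne']
  linarith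

theorem sub_median_le (hf : IntegrableOn f Q.set) (ht0 : 0 < t) (ht1 : t < 1) (c : ℝ) :
    c - median f t Q ≤ (∫ y in Q.set, |f y - c|) / (t * Q.side ^ n) := by
  have hV : 0 < t * Q.side ^ n := mul_pos ht0 (pow_pos Q.side_pos n)
  refine le_of_forall_gt_imp_ge_of_dense fun l hl => ?_
  have hl0 : 0 < l := (div_nonneg (integral_nonneg fun _ => abs_nonneg _) hV.le).trans_lt hl
  have : c - l ≤ median f t Q := le_csSup (bddAbove_medianSet hf ht0.le ht1)
    (sub_mem_medianSet hf c hl0 ((div_lt_iff₀ hV).1 hl).le)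
  linarith

theorem median_sub_le (hf : IntegrableOn f Q.set) (ht0 : 0 < t) (ht1 : t < 1) (c : ℝ) :
    median f t Q - c ≤ (∫ y in Q.set, |f y - c|) / ((1 - t) * Q.side ^ n) := by
  have hV : 0 < (1 - t) * Q.side ^ n := mul_pos (by linarith) (pow_pos Q.side_pos n)
  refine le_of_forall_gt_imp_ge_of_dense fun l hl => ?_
  have hl0 : 0 < l := (div_nonneg (integral_nonneg fun _ => abs_nonneg _) hV.le).trans_lt hl
  have : median f t Q ≤ c + l := csSup_le (medianSet_nonempty hf ht0) fun M hM =>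
    (lt_add_of_mem_medianSet hf c ht0.le hl0 ((div_lt_iff₀ hV).1 hl) hM).le
  linarith

theorem abs_sub_median_le (hf : IntegrableOn f Q.set) {s : ℝ} (hs : 0 < s) (hst : s ≤ t)
    (hts : t ≤ 1 - s) (c : ℝ) :
    |c - median f t Q| ≤ (∫ y in Q.set, |f y - c|) / (s * Q.side ^ n) := by
  have hI : 0 ≤ ∫ y in Q.set, |f y - c| := integral_nonneg fun _ => abs_nonneg _
  have hV := pow_pos Q.side_pos n
  rw [abs_sub_le_iff]
  constructor
  · refine (sub_median_le hf (hs.trans_le hst) (by linarith) c).trans ?_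
    exact div_le_div_of_nonneg_left hI (by positivity) (by gcongr)
  · refine (median_sub_le hf (hs.trans_le hst) (by linarith) c).trans ?_
    exact div_le_div_of_nonneg_left hI (by positivity) (by gcongr; linarith)

end Median

section Oscillation

variable {s t : ℝ} {Q : Cube n} {y₀ : Sp n}

theorem abs_cubeAvg_sub_median_le (hf : IntegrableOn f Q.set) (hs : 0 < s) (hst : s ≤ t)
    (hts : t ≤ 1 - s) (hy₀ : y₀ ∈ Q.set) (hA : fsSharp f y₀ ≠ ⊤) :
    |cubeAvg f Q - median f t Q| ≤ (fsSharp f y₀).toReal / s := by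
  have hV := pow_pos Q.side_pos n
  refine (abs_sub_median_le hf hs hst hts _).trans ?_
  rw [div_le_div_iff₀ (by positivity) hs]
  nlinarith [integral_abs_sub_cubeAvg_le hy₀ hA]

theorem integral_abs_sub_median_dilate_le (hf : LocallyIntegrable f volume) (hs : 0 < s)
    (hst : s ≤ t) (hts : t ≤ 1 - s) (hy₀ : y₀ ∈ Q.set) (hA : fsSharp f y₀ ≠ ⊤) (j : ℕ) :
    ∫ y in (Q.dilate (2 ^ j) (by positivity)).set, |f y - median f t Q| ≤
      (2 ^ j * Q.side) ^ n * ((j * 2 ^ n + 1 / s + 1) * (fsSharp f y₀).toReal) := by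
  set P := Q.dilate (2 ^ j) (by positivity)
  set a := (fsSharp f y₀).toReal
  have hfP : IntegrableOn f P.set := hf.integrableOn_isCompact P.isCompact_set
  have habs : IntegrableOn (fun y => |f y - cubeAvg f P|) P.set :=
    (hfP.sub (integrableOn_const P.volume_set_ne_top)).abs
  have hyP : y₀ ∈ P.set := Q.set_subset_dilate_set (one_le_pow₀ one_le_two) hy₀
  have hmean : |cubeAvg f P - median f t Q| ≤ j * 2 ^ n * a + a / s :=
    (abs_sub_le _ (cubeAvg f Q) _).trans (add_le_add
      (abs_cubeAvg_dilate_sub_cubeAvg_le hf hy₀ hA j)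
      (abs_cubeAvg_sub_median_le (hf.integrableOn_isCompact Q.isCompact_set) hs hst hts hy₀ hA))
  calc ∫ y in P.set, |f y - median f t Q|
      ≤ ∫ y in P.set, (|f y - cubeAvg f P| + (j * 2 ^ n * a + a / s)) := by
        refine integral_mono ((hfP.sub (integrableOn_const P.volume_set_ne_top)).abs)
          (habs.add (integrableOn_const P.volume_set_ne_top)) fun y => ?_
        exact (abs_sub_le _ (cubeAvg f P) _).trans (by gcongr)
    _ = (∫ y in P.set, |f y - cubeAvg f P|) + P.side ^ n * (j * 2 ^ n * a + a / s) := by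
        rw [integral_add habs (integrableOn_const P.volume_set_ne_top), setIntegral_const,
          smul_eq_mul, measureReal_def, P.volume_set_toReal]
    _ ≤ P.side ^ n * a + P.side ^ n * (j * 2 ^ n * a + a / s) := by
        gcongr
        exact integral_abs_sub_cubeAvg_le hyP hA
    _ = (2 ^ j * Q.side) ^ n * ((j * 2 ^ n + 1 / s + 1) * a) := by
        simp only [P, Cube.dilate]
        ring

end Oscillation

theorem summable_geometric_mul_affine {r : ℝ} (hr0 : 0 ≤ r) (hr1 : r < 1) (a b : ℝ) :
    Summable fun j : ℕ => r ^ j * ((j + 2) * a + b) :=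
  (((summable_pow_mul_geometric_of_norm_lt_one 1 (by rwa [Real.norm_of_nonneg hr0])).mul_left a).add
    ((summable_geometric_of_lt_one hr0 hr1).mul_left (2 * a + b))).congr fun j => by ring

def IsHolderKernel (k : Sp n → Sp n → ℝ) (C δ : ℝ) : Prop :=
  ∀ (Q : Cube n), ∀ x ∈ Q.set, ∀ x' ∈ Q.set, ∀ y ∉ (Q.dilate 2 two_pos).set,
    |k x y - k x' y| ≤ C * ‖x - x'‖ ^ δ / ‖x - y‖ ^ ((n : ℝ) + δ)

section Kernel

variable {k : Sp n → Sp n → ℝ} {C δ s t : ℝ} {Q : Cube n} {z y₀ : Sp n}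

theorem IsHolderKernel.abs_sub_center_le (hk : IsHolderKernel k C δ) (hC : 0 ≤ C) (hδ : 0 < δ)
    (hz : z ∈ Q.set) {j : ℕ} {y : Sp n} (hy : y ∉ (Q.dilate (2 ^ (j + 1)) (by positivity)).set) :
    |k z y - k Q.center y| ≤ C * √n ^ δ * ((2 ^ δ)⁻¹) ^ j / (2 ^ j * (Q.side / 2)) ^ n := by
  have hh := half_pos Q.side_pos
  have hR : 0 < 2 ^ j * (Q.side / 2) := by positivity
  have h2Q : y ∉ (Q.dilate 2 two_pos).set := fun h => hy <| Q.dilate_set_mono two_pos _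
    (by simpa using pow_le_pow_right₀ one_le_two (Nat.succ_pos j)) h
  calc |k z y - k Q.center y|
      ≤ C * ‖z - Q.center‖ ^ δ / ‖z - y‖ ^ ((n : ℝ) + δ) :=
        hk Q z hz Q.center Q.center_mem_set y h2Q
    _ ≤ C * (√n * (Q.side / 2)) ^ δ / (2 ^ j * (Q.side / 2)) ^ ((n : ℝ) + δ) := by
        gcongr
        · exact Cube.norm_sub_center_le hz
        · exact Cube.le_norm_sub_of_notMem_dilate hz hy
    _ = C * √n ^ δ * ((2 ^ δ)⁻¹) ^ j / (2 ^ j * (Q.side / 2)) ^ n := by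
        rw [Real.rpow_add hR, Real.rpow_natCast, Real.mul_rpow (Real.sqrt_nonneg _) hh.le,
          Real.mul_rpow (by positivity) hh.le, ← Real.rpow_natCast (2 : ℝ) j,
          ← Real.rpow_mul zero_le_two, mul_comm (j : ℝ), Real.rpow_mul zero_le_two, inv_pow]
        field_simp
        norm_cast

theorem IsHolderKernel.lintegral_annulus_le (hk : IsHolderKernel k C δ) (hC : 0 ≤ C)
    (hδ : 0 < δ) (hf : LocallyIntegrable f volume) (hs : 0 < s) (hst : s ≤ t) (hts : t ≤ 1 - s)
    (hz : z ∈ Q.set) (hy₀ : y₀ ∈ Q.set) (hA : fsSharp f y₀ ≠ ⊤) (j : ℕ) :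
    ∫⁻ y in (Q.dilate (2 ^ (j + 2)) (by positivity)).set \
        (Q.dilate (2 ^ (j + 1)) (by positivity)).set,
        ‖(k z y - k Q.center y) * (f y - median f t Q)‖ₑ ≤
      ENNReal.ofReal (C * √n ^ δ * 8 ^ n *
        (((2 ^ δ)⁻¹) ^ j * ((j + 2) * 2 ^ n + 1 / s + 1)) * (fsSharp f y₀).toReal) := by
  set P := Q.dilate (2 ^ (j + 2)) (by positivity)
  set K := C * √n ^ δ * ((2 ^ δ)⁻¹) ^ j / (2 ^ j * (Q.side / 2)) ^ n
  have hR : 0 < 2 ^ j * (Q.side / 2) := by have := Q.side_pos; positivity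
  have hK : 0 ≤ K :=
    div_nonneg (mul_nonneg (mul_nonneg hC (by positivity)) (by positivity)) (by positivity)
  have hint : IntegrableOn (fun y => |f y - median f t Q|) P.set :=
    ((hf.integrableOn_isCompact P.isCompact_set).sub (integrableOn_const P.volume_set_ne_top)).abs
  have hpoint : ∀ y ∈ P.set \ (Q.dilate (2 ^ (j + 1)) (by positivity)).set,
      ‖(k z y - k Q.center y) * (f y - median f t Q)‖ₑ ≤
        ENNReal.ofReal K * ENNReal.ofReal |f y - median f t Q| := fun y hy => by
    rw [Real.enorm_eq_ofReal_abs, abs_mul, ← ENNReal.ofReal_mul hK]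
    exact ENNReal.ofReal_le_ofReal (by gcongr; exact hk.abs_sub_center_le hC hδ hz hy.2)
  calc _ ≤ ∫⁻ y in P.set \ (Q.dilate (2 ^ (j + 1)) (by positivity)).set,
        ENNReal.ofReal K * ENNReal.ofReal |f y - median f t Q| :=
        setLIntegral_mono' (P.measurableSet_set.diff (Cube.measurableSet_set _)) hpoint
    _ ≤ ENNReal.ofReal K * ∫⁻ y in P.set, ENNReal.ofReal |f y - median f t Q| := by
        rw [lintegral_const_mul' _ _ ENNReal.ofReal_ne_top]
        exact mul_le_mul_right (lintegral_mono_set Set.sdiff_subset) _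
    _ = ENNReal.ofReal (K * ∫ y in P.set, |f y - median f t Q|) := by
        rw [ENNReal.ofReal_mul hK,
          ofReal_integral_eq_lintegral_ofReal hint (.of_forall fun _ => abs_nonneg _)]
    _ ≤ ENNReal.ofReal (K * ((2 ^ (j + 2) * Q.side) ^ n *
          ((↑(j + 2) * 2 ^ n + 1 / s + 1) * (fsSharp f y₀).toReal))) := by
        gcongr
        exact integral_abs_sub_median_dilate_le hf hs hst hts hy₀ hA (j + 2)
    _ = _ := by
        have h8 : (2 ^ (j + 2) * Q.side) ^ n = 8 ^ n * (2 ^ j * (Q.side / 2)) ^ n := by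
          rw [← mul_pow]; ring
        rw [h8]
        congr 1
        rw [div_mul_eq_mul_div, div_eq_iff (pow_pos hR n).ne']
        push_cast
        ring

theorem IsHolderKernel.lintegral_compl_dilate_two_le (hk : IsHolderKernel k C δ) (hC : 0 ≤ C)
    (hδ : 0 < δ) (hf : LocallyIntegrable f volume) (hs : 0 < s) (hst : s ≤ t) (hts : t ≤ 1 - s)
    (hz : z ∈ Q.set) (hy₀ : y₀ ∈ Q.set) (hA : fsSharp f y₀ ≠ ⊤) :
    ∫⁻ y in ((Q.dilate 2 two_pos).set)ᶜ, ‖(k z y - k Q.center y) * (f y - median f t Q)‖ₑ ≤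
      ENNReal.ofReal (C * √n ^ δ * 8 ^ n *
        (∑' j : ℕ, ((2 ^ δ)⁻¹) ^ j * ((j + 2) * 2 ^ n + 1 / s + 1)) * (fsSharp f y₀).toReal) := by
  have hr : (2 ^ δ : ℝ)⁻¹ < 1 := inv_lt_one_of_one_lt₀ (Real.one_lt_rpow one_lt_two hδ)
  have hsum := ((summable_geometric_mul_affine (by positivity) hr (2 ^ n) (1 / s + 1)).mul_left
    (C * √n ^ δ * 8 ^ n)).mul_right (fsSharp f y₀).toReal
  calc _ ≤ ∑' j : ℕ, ∫⁻ y in (Q.dilate (2 ^ (j + 2)) (by positivity)).set \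
          (Q.dilate (2 ^ (j + 1)) (by positivity)).set,
          ‖(k z y - k Q.center y) * (f y - median f t Q)‖ₑ :=
        (lintegral_mono_set Q.compl_dilate_two_subset_iUnion).trans (lintegral_iUnion_le _ _)
    _ ≤ ∑' j : ℕ, ENNReal.ofReal (C * √n ^ δ * 8 ^ n *
          (((2 ^ δ)⁻¹) ^ j * ((j + 2) * 2 ^ n + 1 / s + 1)) * (fsSharp f y₀).toReal) :=
        ENNReal.tsum_le_tsum fun j => hk.lintegral_annulus_le hC hδ hf hs hst hts hz hy₀ hA j
    _ = _ := by
        rw [← ENNReal.ofReal_tsum_of_nonneg (fun j => by positivity)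
          (by simpa only [add_assoc] using hsum), tsum_mul_right, tsum_mul_left]

end Kernel

/-- For a kernel `k` with the Hölder-type regularity, `0 < s ≤ 1/2`,
`1/2 ≤ t ≤ 1 − s`, a cube `Q` with center `x_Q`, and `f` locally integrable with
`∫_{(2Q)^c} |f(y) − m_f(t,Q)|/|z−y|^{n+δ} dy < ∞` for `z ∈ Q`, there is `c = c_{n,δ,s}`
such that for every `z ∈ Q`:
`|∫_{(2Q)^c} (k(z,y) − k(x_Q,y))(f(y) − m_f(t,Q)) dy| ≤ c inf_{y ∈ Q} M♯f(y)`. -/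
theorem statement7 {n : ℕ} (k : Sp n → Sp n → ℝ)
    (C δ : ℝ) (hC : 0 < C) (hδ : 0 < δ)
    (hker : ∀ (Q : Cube n), ∀ x ∈ Q.set, ∀ x' ∈ Q.set,
      ∀ y ∉ (Q.dilate 2 (by norm_num)).set,
        |k x y - k x' y| ≤ C * ‖x - x'‖ ^ δ / ‖x - y‖ ^ ((n : ℝ) + δ))
    (s t : ℝ) (hs0 : 0 < s) (hs : s ≤ 1 / 2) (ht : 1 / 2 ≤ t) (ht1 : t ≤ 1 - s) :
    ∃ c : ℝ, 0 < c ∧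
      ∀ (Q : Cube n) (f : Sp n → ℝ), LocallyIntegrable f volume →
        (∀ z ∈ Q.set,
          IntegrableOn
            (fun y => |f y - median f t Q| / ‖z - y‖ ^ ((n : ℝ) + δ))
            ((Q.dilate 2 (by norm_num)).set)ᶜ volume) →
        ∀ z ∈ Q.set,
          ENNReal.ofReal
              |∫ y in ((Q.dilate 2 (by norm_num)).set)ᶜ,
                  (k z y - k Q.center y) * (f y - median f t Q)|
            ≤ ENNReal.ofReal c * ⨅ y : Q.set, fsSharp f ↑y := by
  set w : ℕ → ℝ := fun j => ((2 ^ δ)⁻¹) ^ j * ((j + 2) * 2 ^ n + 1 / s + 1)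
  have hw : Summable w := by
    simpa only [w, add_assoc] using summable_geometric_mul_affine (by positivity)
      (inv_lt_one_of_one_lt₀ (Real.one_lt_rpow one_lt_two hδ)) (2 ^ n) (1 / s + 1)
  have hw0 : 0 < ∑' j, w j := hw.tsum_pos (fun j => by positivity) 0 (by positivity)
  -- `√n + 1` rather than `√n` keeps the constant positive when `n = 0`.
  have hc : 0 < C * (√n + 1) ^ δ * 8 ^ n * ∑' j, w j := by positivity
  refine ⟨_, hc, fun Q f hf _ z hz => ?_⟩
  rw [ENNReal.mul_iInf_of_ne (ENNReal.ofReal_pos.2 hc).ne' ENNReal.ofReal_ne_top]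
  refine le_iInf fun ⟨y₀, hy₀⟩ => ?_
  obtain hA | hA := eq_or_ne (fsSharp f y₀) ⊤
  · simp [hA, ENNReal.mul_top (ENNReal.ofReal_pos.2 hc).ne']
  calc ENNReal.ofReal |∫ y in ((Q.dilate 2 two_pos).set)ᶜ,
          (k z y - k Q.center y) * (f y - median f t Q)|
      ≤ ∫⁻ y in ((Q.dilate 2 two_pos).set)ᶜ, ‖(k z y - k Q.center y) * (f y - median f t Q)‖ₑ :=
        Real.enorm_eq_ofReal_abs _ ▸ enorm_integral_le_lintegral_enorm _
    _ ≤ ENNReal.ofReal (C * √n ^ δ * 8 ^ n * (∑' j, w j) * (fsSharp f y₀).toReal) :=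
        IsHolderKernel.lintegral_compl_dilate_two_le hker hC.le hδ hf hs0 (hs.trans ht) ht1 hz
          hy₀ hA
    _ ≤ ENNReal.ofReal (C * (√n + 1) ^ δ * 8 ^ n * (∑' j, w j) * (fsSharp f y₀).toReal) := by
        gcongr
        linarith
    _ = ENNReal.ofReal (C * (√n + 1) ^ δ * 8 ^ n * ∑' j, w j) * fsSharp f y₀ := by
        rw [ENNReal.ofReal_mul hc.le, ENNReal.ofReal_toReal hA]

end LocalMedian
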